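/- For all x ∈ ℝ and all μ ∈ ℝ, the partial derivative of f_μ(x) with respect to x equals −((x−μ)/σ²)·f_μ(x) − f_μ(x)·Σ_{i=1}^k (l(x,b_i) − l(x,a_i)). -/

import Mathlib

open MeasureTheory ProbabilityTheory Set Filter Topology

noncomputable def stdphi (x : ℝ) : ℝ := Real.exp (-(x ^ 2) / 2) / Real.sqrt (2 * Real.pi)

noncomputable def stdPhi (x : ℝ) : ℝ := ∫ t in Iic x, stdphi t

noncomputable def stdPhiInv : ℝ → ℝ := Function.invFun stdPhi

noncomputable def stdPhiE (c : EReal) (x s : ℝ) : ℝ :=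
  if c = ⊤ then 1 else if c = ⊥ then 0 else stdPhi ((c.toReal - x) / s)

def truncOrdered {k : ℕ} (a b : Fin k → EReal) : Prop :=
  (∀ i, a i < b i) ∧ ∀ i j : Fin k, i < j → b i < a j

def truncSet {k : ℕ} (a b : Fin k → EReal) : Set ℝ :=
  {x : ℝ | ∃ i, a i < (x : EReal) ∧ (x : EReal) < b i}

noncomputable def truncSum {k : ℕ} (a b : Fin k → EReal) (s x : ℝ) : ℝ :=
  ∑ i, (stdPhiE (b i) x s - stdPhiE (a i) x s)

noncomputable def condPDF {k : ℕ} (a b : Fin k → EReal) (σ τ μ x : ℝ) : ℝ :=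
  (1 / σ) * stdphi ((x - μ) / σ) * truncSum a b τ x
    / truncSum a b (Real.sqrt (σ ^ 2 + τ ^ 2)) μ

noncomputable def Fmu {k : ℕ} (a b : Fin k → EReal) (σ τ μ x : ℝ) : ℝ :=
  ∫ u in Iic x, condPDF a b σ τ μ u

/-- `G_μ(x,v) = Φ((x - (ρ²μ + (1-ρ²)v))/(σρ))` with `ρ² = τ²/(σ²+τ²)`. -/
noncomputable def Gfun (σ τ μ x v : ℝ) : ℝ :=
  stdPhi ((x - (τ ^ 2 / (σ ^ 2 + τ ^ 2) * μ + (1 - τ ^ 2 / (σ ^ 2 + τ ^ 2)) * v)) /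
    (σ * Real.sqrt (τ ^ 2 / (σ ^ 2 + τ ^ 2))))

/-- `G_μ(x,v)` for an extended-real `v`, with the natural conventions at `±∞`. -/
noncomputable def GfunE (σ τ μ x : ℝ) (c : EReal) : ℝ :=
  if c = ⊤ then 0 else if c = ⊥ then 1 else Gfun σ τ μ x c.toReal

/-- `h(v)` from Lemma `le_dmu_formula`. -/
noncomputable def hfun {k : ℕ} (a b : Fin k → EReal) (σ τ μ v : ℝ) : ℝ :=
  (1 / Real.sqrt (σ ^ 2 + τ ^ 2)) * stdphi ((v - μ) / Real.sqrt (σ ^ 2 + τ ^ 2)) /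
    truncSum a b (Real.sqrt (σ ^ 2 + τ ^ 2)) μ

/-- `h(v)` for an extended-real `v`, with the convention `φ(±∞) = 0`. -/
noncomputable def hfunE {k : ℕ} (a b : Fin k → EReal) (σ τ μ : ℝ) (c : EReal) : ℝ :=
  if c = ⊤ then 0 else if c = ⊥ then 0 else hfun a b σ τ μ c.toReal

/-- `l(x,v)` from Lemma `le_dens_dx`. -/
noncomputable def lfun {k : ℕ} (a b : Fin k → EReal) (τ x v : ℝ) : ℝ :=
  (1 / τ) * stdphi ((v - x) / τ) / truncSum a b τ x

/-- `l(x,v)` for an extended-real `v`, with the convention `φ(±∞) = 0`. -/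
noncomputable def lfunE {k : ℕ} (a b : Fin k → EReal) (τ x : ℝ) (c : EReal) : ℝ :=
  if c = ⊤ then 0 else if c = ⊥ then 0 else lfun a b τ x c.toReal

/-- The function `B_μ(x)` from the proof of Proposition 1. -/
noncomputable def Bfun {k : ℕ} (a b : Fin k → EReal) (σ τ μ x : ℝ) : ℝ :=
  Real.sqrt (τ ^ 2 / (σ ^ 2 + τ ^ 2)) / σ * stdphi (stdPhiInv (Fmu a b σ τ μ x))
    - condPDF a b σ τ μ x
    + ∑ i, (hfunE a b σ τ μ (b i) * (Fmu a b σ τ μ x - GfunE σ τ μ x (b i))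
        - hfunE a b σ τ μ (a i) * (Fmu a b σ τ μ x - GfunE σ τ μ x (a i)))

/-!
The denominator of `f_μ` does not depend on `x`, so `f_μ` is, up to a constant, the product of
the Gaussian density `x ↦ φ((x-μ)/σ)/σ`, whose logarithmic derivative is `-(x-μ)/σ²`, and the
truncation mass `T(x) = ∑ᵢ (Φ((bᵢ-x)/τ) - Φ((aᵢ-x)/τ))`. Differentiating each `Φ` term gives
`T'(x) = -∑ᵢ (φ((bᵢ-x)/τ) - φ((aᵢ-x)/τ))/τ = -T(x) ∑ᵢ (l(x,bᵢ) - l(x,aᵢ))`, where the last step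
uses `T(x) > 0` (since `aᵢ < bᵢ` and `Φ` is strictly increasing). The product rule finishes.
-/

lemma stdphi_eq_gaussianPDFReal : stdphi = gaussianPDFReal 0 1 := by
  funext x
  simp [stdphi, gaussianPDFReal, div_eq_inv_mul, mul_comm]

lemma continuous_stdphi : Continuous stdphi := by
  unfold stdphi
  fun_prop

lemma hasDerivAt_stdphi (x : ℝ) : HasDerivAt stdphi (-x * stdphi x) x := by
  have hexp : HasDerivAt (fun y : ℝ => -(y ^ 2) / 2) (-x) x := by
    refine ((hasDerivAt_pow 2 x).neg.div_const 2).congr_deriv ?_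
    ring
  refine (hexp.exp.div_const (Real.sqrt (2 * Real.pi))).congr_deriv ?_
  simp only [stdphi]
  ring

lemma hasDerivAt_stdPhi (x : ℝ) : HasDerivAt stdPhi (stdphi x) x := by
  have hint : Integrable stdphi := stdphi_eq_gaussianPDFReal ▸ integrable_gaussianPDFReal 0 1
  have hsplit : stdPhi = fun y => stdPhi 0 + ∫ t in (0 : ℝ)..y, stdphi t := by
    funext y
    have := intervalIntegral.integral_Iic_sub_Iic (hint.integrableOn (s := Iic 0))
      (hint.integrableOn (s := Iic y))
    rw [stdPhi, stdPhi, ← this, add_sub_cancel]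
  rw [hsplit]
  exact ((continuous_stdphi.integral_hasStrictDerivAt 0 x).hasDerivAt).const_add _

lemma stdPhi_strictMono : StrictMono stdPhi :=
  strictMono_of_hasDerivAt_pos hasDerivAt_stdPhi fun x => by
    simpa [stdphi_eq_gaussianPDFReal] using gaussianPDFReal_pos 0 1 x one_ne_zero

lemma stdPhi_nonneg (x : ℝ) : 0 ≤ stdPhi x :=
  setIntegral_nonneg measurableSet_Iic fun t _ => by
    simpa [stdphi_eq_gaussianPDFReal] using gaussianPDFReal_nonneg 0 1 t

lemma stdPhi_le_one (x : ℝ) : stdPhi x ≤ 1 := by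
  rw [stdPhi, stdphi_eq_gaussianPDFReal, ← integral_gaussianPDFReal_eq_one 0 one_ne_zero]
  exact setIntegral_le_integral (integrable_gaussianPDFReal 0 1)
    (Eventually.of_forall (gaussianPDFReal_nonneg 0 1))

lemma stdPhi_pos (x : ℝ) : 0 < stdPhi x :=
  (stdPhi_nonneg (x - 1)).trans_lt (stdPhi_strictMono (by linarith))

lemma stdPhi_lt_one (x : ℝ) : stdPhi x < 1 :=
  (stdPhi_strictMono (by linarith : x < x + 1)).trans_le (stdPhi_le_one _)

lemma stdPhiE_strictMono (x : ℝ) {s : ℝ} (hs : 0 < s) :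
    StrictMono fun c : EReal => stdPhiE c x s := by
  intro c d hcd
  induction c using EReal.rec with
  | top => exact absurd hcd not_top_lt
  | bot =>
    induction d using EReal.rec with
    | bot => exact absurd hcd (lt_irrefl _)
    | coe r => simpa [stdPhiE] using stdPhi_pos ((r - x) / s)
    | top => simp [stdPhiE]
  | coe r =>
    induction d using EReal.rec with
    | bot => exact absurd hcd not_lt_bot
    | coe r' =>
      simpa [stdPhiE] using
        stdPhi_strictMono ((div_lt_div_iff_of_pos_right hs).2 (by simpa using hcd))
    | top => simpa [stdPhiE] using stdPhi_lt_one ((r - x) / s)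

lemma truncSum_pos {k : ℕ} [NeZero k] {a b : Fin k → EReal} (hab : ∀ i, a i < b i)
    {s : ℝ} (hs : 0 < s) (x : ℝ) : 0 < truncSum a b s x :=
  Finset.sum_pos (fun i _ => sub_pos.2 (stdPhiE_strictMono x hs (hab i))) Finset.univ_nonempty

noncomputable def stdphiE (c : EReal) (x s : ℝ) : ℝ :=
  if c = ⊤ then 0 else if c = ⊥ then 0 else stdphi ((c.toReal - x) / s)

lemma hasDerivAt_stdPhiE (c : EReal) (s x : ℝ) :
    HasDerivAt (fun y => stdPhiE c y s) (-(stdphiE c x s / s)) x := by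
  induction c using EReal.rec with
  | bot => simpa [stdPhiE, stdphiE] using hasDerivAt_const x (0 : ℝ)
  | top => simpa [stdPhiE, stdphiE] using hasDerivAt_const x (1 : ℝ)
  | coe r =>
    have hinner : HasDerivAt (fun y : ℝ => (r - y) / s) (-1 / s) x := by
      simpa using ((hasDerivAt_const x r).sub (hasDerivAt_id x)).div_const s
    simp only [stdPhiE, stdphiE, EReal.coe_ne_top, EReal.coe_ne_bot, if_false, EReal.toReal_coe]
    exact ((hasDerivAt_stdPhi _).comp x hinner).congr_deriv (by ring)

lemma lfunE_eq {k : ℕ} (a b : Fin k → EReal) (τ x : ℝ) (c : EReal) :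
    lfunE a b τ x c = stdphiE c x τ / τ / truncSum a b τ x := by
  induction c using EReal.rec <;> simp [lfunE, stdphiE, lfun]; ring

lemma hasDerivAt_truncSum {k : ℕ} (a b : Fin k → EReal) {τ x : ℝ}
    (hT : truncSum a b τ x ≠ 0) :
    HasDerivAt (fun y => truncSum a b τ y)
      (-(truncSum a b τ x * ∑ i, (lfunE a b τ x (b i) - lfunE a b τ x (a i)))) x := by
  have hsum := HasDerivAt.fun_sum (u := Finset.univ) fun i _ =>
    (hasDerivAt_stdPhiE (b i) τ x).sub (hasDerivAt_stdPhiE (a i) τ x)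
  refine hsum.congr_deriv ?_
  simp only [lfunE_eq, Finset.mul_sum, ← Finset.sum_neg_distrib]
  refine Finset.sum_congr rfl fun i _ => ?_
  field_simp
  ring

lemma hasDerivAt_stdphi_div (σ μ x : ℝ) :
    HasDerivAt (fun y => (1 / σ) * stdphi ((y - μ) / σ))
      (-((x - μ) / σ ^ 2) * ((1 / σ) * stdphi ((x - μ) / σ))) x := by
  have hinner : HasDerivAt (fun y : ℝ => (y - μ) / σ) (1 / σ) x := by
    simpa using ((hasDerivAt_id x).sub (hasDerivAt_const x μ)).div_const σ
  exact (((hasDerivAt_stdphi _).comp x hinner).const_mul (1 / σ)).congr_deriv (by ring)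

theorem stmt17_general {k : ℕ} (a b : Fin (k + 1) → EReal) (hab : truncOrdered a b)
    (σ τ : ℝ) (hτ : 0 < τ) (x μ : ℝ) :
    HasDerivAt (fun y => condPDF a b σ τ μ y)
      (-((x - μ) / σ ^ 2) * condPDF a b σ τ μ x
        - condPDF a b σ τ μ x * ∑ i, (lfunE a b τ x (b i) - lfunE a b τ x (a i))) x := by
  have hT := (truncSum_pos hab.1 hτ x).ne'
  have hprod := ((hasDerivAt_stdphi_div σ μ x).mul (hasDerivAt_truncSum a b hT)).div_const
    (truncSum a b (Real.sqrt (σ ^ 2 + τ ^ 2)) μ)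
  refine hprod.congr_deriv ?_
  simp only [condPDF]
  ring

/-- Lemma (`le_dens_dx`): `∂f_μ(x)/∂x = -((x-μ)/σ²) f_μ(x) - f_μ(x) ∑ᵢ (l(x,bᵢ) - l(x,aᵢ))`. -/
theorem stmt17 {k : ℕ} (a b : Fin (k + 1) → EReal) (hab : truncOrdered a b)
    (σ τ : ℝ) (hσ : 0 < σ) (hτ : 0 < τ) (x μ : ℝ) :
    HasDerivAt (fun y => condPDF a b σ τ μ y)
      (-((x - μ) / σ ^ 2) * condPDF a b σ τ μ x
        - condPDF a b σ τ μ x * ∑ i, (lfunE a b τ x (b i) - lfunE a b τ x (a i))) x :=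
  stmt17_general a b hab σ τ hτ x μ
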